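/- arXiv:2510.13764 — 3 statements merged into one kernel-verified Lean document; each statement's English description precedes it below -/
import Mathlib

section
/- For j ≥ 1, the divided difference operator satisfies ∂_{t-1} h_j(x_t, x_{t+1},...,x_b) = -h_{j-1}(x_{t-1}, x_t,...,x_b), where h_j denotes the complete homogeneous symmetric polynomial in the given variables. -/
variable {R : Type*} [CommRing R]

/-- The geometric series `Σ xⁿ tⁿ`, i.e. the formal power series `1/(1 - x·t)`:
it is the (unique) inverse of `1 - x·t` in `R⟦t⟧`. -/
noncomputable def geomInv (x : R) : PowerSeries R := PowerSeries.mk fun n => x ^ n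

/-- The generating function `E_A(t) = Π_{x ∈ A} (1 + x·t)` of the elementary symmetric
functions of an alphabet `A` (a finite multiset). -/
noncomputable def eGen (A : Multiset R) : PowerSeries R :=
  (A.map fun x => 1 + PowerSeries.C x * PowerSeries.X).prod

/-- The generating function `H_A(t) = Π_{x ∈ A} 1/(1 - x·t)` of the complete homogeneous
symmetric functions of an alphabet `A`. -/
noncomputable def hGen (A : Multiset R) : PowerSeries R :=
  (A.map fun x => geomInv x).prod

/-- `e_i(A)`: the `i`-th elementary symmetric function of the alphabet `A`. -/
noncomputable def eA (A : Multiset R) (i : ℕ) : R := PowerSeries.coeff i (eGen A)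

/-- `h_i(A)`: the `i`-th complete homogeneous symmetric function of the alphabet `A`. -/
noncomputable def hA (A : Multiset R) (i : ℕ) : R := PowerSeries.coeff i (hGen A)

/-- `e_i(A - B)`, defined by the generating function
`Π_{x ∈ A} (1 + x·t) · Π_{y ∈ B} 1/(1 + y·t)`. -/
noncomputable def eDiff (A B : Multiset R) (i : ℕ) : R :=
  PowerSeries.coeff i (eGen A * (B.map fun y => geomInv (-y)).prod)

/-- `h_i(A - B)`, defined by the generating function
`Π_{x ∈ A} 1/(1 - x·t) · Π_{y ∈ B} (1 - y·t)`. -/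
noncomputable def hDiff (A B : Multiset R) (i : ℕ) : R :=
  PowerSeries.coeff i (hGen A * (B.map fun y => 1 - PowerSeries.C y * PowerSeries.X).prod)

open MvPolynomial

/-- The transposition operator `s_i` on `ℤ[x_1, x_2, …]` swapping `x_i` and `x_{i+1}`. -/
noncomputable def sN (i : ℕ) : MvPolynomial ℕ ℤ →ₐ[ℤ] MvPolynomial ℕ ℤ :=
  rename ⇑(Equiv.swap i (i + 1))

/-- `D` is the divided difference operator `∂_i`, characterized by
`(x_i - x_{i+1}) * D P = P - s_i P`. -/
def IsDividedDiffN (i : ℕ) (D : MvPolynomial ℕ ℤ → MvPolynomial ℕ ℤ) : Prop :=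
  ∀ P, (X i - X (i + 1)) * D P = P - sN i P

/-!
From `H_A(t) = Π_{x ∈ A} 1/(1 - x t)` and
`1/(1 - a t) - 1/(1 - c t) = (a - c) t / ((1 - a t)(1 - c t))` one gets
`h_{k+1}(a, B) - h_{k+1}(c, B) = (a - c) h_k(c, a, B)`.
With `a = x_t`, `c = x_{t-1}` and `B = {x_{t+1}, …, x_b}` the left side is `P - s_{t-1} P`
for `P = h_{k+1}(x_t, …, x_b)`, and dividing by `x_{t-1} - x_t` gives the claim.
-/

namespace PowerSeries

lemma one_sub_C_mul_X_mul_geomInv (x : R) : (1 - C x * X) * geomInv x = 1 := by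
  ext n
  cases n with
  | zero => simp [geomInv, coeff_zero_eq_constantCoeff]
  | succ n =>
    simp only [sub_mul, one_mul, map_sub, mul_assoc]
    rw [coeff_C_mul, coeff_succ_X_mul]
    simp [geomInv, pow_succ, mul_comm]

lemma geomInv_sub_geomInv (a c : R) :
    geomInv a - geomInv c = C (a - c) * X * (geomInv a * geomInv c) := by
  rw [map_sub]
  linear_combination geomInv c * one_sub_C_mul_X_mul_geomInv a -
    geomInv a * one_sub_C_mul_X_mul_geomInv c

lemma map_geomInv {S : Type*} [CommRing S] (f : R →+* S) (x : R) :
    map f (geomInv x) = geomInv (f x) := by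
  ext n
  simp [geomInv]

lemma map_hGen {S : Type*} [CommRing S] (f : R →+* S) (A : Multiset R) :
    map f (hGen A) = hGen (A.map f) := by
  simp only [hGen, map_multiset_prod, Multiset.map_map, Function.comp_def, map_geomInv]

end PowerSeries

lemma map_hA {S : Type*} [CommRing S] (f : R →+* S) (A : Multiset R) (i : ℕ) :
    f (hA A i) = hA (A.map f) i := by
  rw [hA, hA, ← PowerSeries.map_hGen, PowerSeries.coeff_map]

lemma hGen_cons (a : R) (A : Multiset R) : hGen (a ::ₘ A) = geomInv a * hGen A := by
  rw [hGen, hGen, Multiset.map_cons, Multiset.prod_cons]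

lemma hGen_cons_sub_hGen_cons (a c : R) (B : Multiset R) :
    hGen (a ::ₘ B) - hGen (c ::ₘ B) =
      PowerSeries.X * (PowerSeries.C (a - c) * hGen (c ::ₘ a ::ₘ B)) := by
  rw [hGen_cons, hGen_cons, hGen_cons, hGen_cons, ← sub_mul,
    PowerSeries.geomInv_sub_geomInv, map_sub]
  ring

lemma hA_cons_sub_hA_cons (a c : R) (B : Multiset R) (k : ℕ) :
    hA (a ::ₘ B) (k + 1) - hA (c ::ₘ B) (k + 1) = (a - c) * hA (c ::ₘ a ::ₘ B) k := by
  rw [hA, hA, ← map_sub, hGen_cons_sub_hGen_cons, PowerSeries.coeff_succ_X_mul,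
    PowerSeries.coeff_C_mul, hA]

lemma sN_X_succ (i : ℕ) : sN i (X (i + 1)) = X i := by
  rw [sN, rename_X, Equiv.swap_apply_right]

lemma sN_X_of_ne {i m : ℕ} (hi : m ≠ i) (hi' : m ≠ i + 1) : sN i (X m) = X m := by
  rw [sN, rename_X, Equiv.swap_apply_of_ne_of_ne hi hi']

lemma IsDividedDiffN.eq_of_sub_eq_mul {i : ℕ} {D : MvPolynomial ℕ ℤ → MvPolynomial ℕ ℤ}
    (hD : IsDividedDiffN i D) {P Q : MvPolynomial ℕ ℤ}
    (h : P - sN i P = (X i - X (i + 1)) * Q) : D P = Q :=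
  mul_left_cancel₀ (sub_ne_zero.mpr fun hX => by simpa using X_injective hX) ((hD P).trans h)

/-- For `j ≥ 1` and `2 ≤ t ≤ b`:
`∂_{t-1} h_j(x_t, …, x_b) = -h_{j-1}(x_{t-1}, x_t, …, x_b)`. -/
theorem divided_diff_hsym (b t j : ℕ) (ht : 2 ≤ t) (htb : t ≤ b) (hj : 1 ≤ j)
    (D : MvPolynomial ℕ ℤ → MvPolynomial ℕ ℤ) (hD : IsDividedDiffN (t - 1) D) :
    D (hA ((Finset.Icc t b).val.map fun m => (X m : MvPolynomial ℕ ℤ)) j) =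
      -hA ((Finset.Icc (t - 1) b).val.map fun m => (X m : MvPolynomial ℕ ℤ)) (j - 1) := by
  obtain ⟨i, rfl⟩ : ∃ i, t = i + 1 := ⟨t - 1, by omega⟩
  obtain ⟨k, rfl⟩ : ∃ k, j = k + 1 := ⟨j - 1, by omega⟩
  simp only [Nat.add_sub_cancel] at hD ⊢
  set B := (Finset.Ioc (i + 1) b).val.map fun m => (X m : MvPolynomial ℕ ℤ)
  have hB : B.map (sN i) = B := by
    simp only [B, Multiset.map_map]
    refine Multiset.map_congr rfl fun m hm => ?_
    have := (Finset.mem_Ioc.mp (Finset.mem_def.mpr hm)).1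
    exact sN_X_of_ne (by omega) (by omega)
  have hIcc_succ : (Finset.Icc (i + 1) b).val.map (fun m => (X m : MvPolynomial ℕ ℤ)) =
      X (i + 1) ::ₘ B := by
    rw [Finset.Icc_eq_cons_Ioc htb, Finset.cons_val, Multiset.map_cons]
  have hIcc : (Finset.Icc i b).val.map (fun m => (X m : MvPolynomial ℕ ℤ)) =
      X i ::ₘ X (i + 1) ::ₘ B := by
    rw [Finset.Icc_eq_cons_Ioc (by omega), Finset.cons_val, Multiset.map_cons,
      ← Finset.Icc_add_one_left_eq_Ioc, hIcc_succ]
  have hswap : sN i (hA (X (i + 1) ::ₘ B) (k + 1)) = hA (X i ::ₘ B) (k + 1) := by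
    rw [← RingHom.coe_coe, map_hA, Multiset.map_cons, RingHom.coe_coe, sN_X_succ, hB]
  rw [hIcc_succ, hIcc]
  refine hD.eq_of_sub_eq_mul ?_
  rw [hswap, hA_cons_sub_hA_cons]
  ring
end

section
/- The 1-cochain υ on the fine cubulation of the cube [0,3]^b is a coboundary: there exists a function G : ([0,3]^b ∩ Z^b) → Z with G(0,...,0) = 0 whose coboundary is υ, and such a G is unique. -/
/-!
An explicit primitive is
`G ε = ∑ k, g_k (ε k) + 2 · #{k < m | ε k ∈ {1, 2}, ε m ∈ {2, 3}}`.
Moving `ε i` across the edge `j — j+1` changes the pair count by the number of `m > i` with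
`ε m ∈ {2, 3}` (for `j = 0, 2`) or of `k < i` with `ε k ∈ {1, 2}` (for `j = 1`), which are the
counts in `υ` (for `j = 0` through `#{m > i | ε m ∈ {0, 1}} = b - 1 - i - #{m > i | ε m ∈ {2, 3}}`);
the one-variable terms `g_i` absorb the constants. Uniqueness: a function with zero coboundary
is constant, since every vertex is joined to the origin by a path of edges.
-/

/-- The 1-cochain `υ` on the fine cubulation of `[0,3]^b`.  For a coordinate direction
`i`, a vertex with coordinates `ε` away from `i`, and `j ∈ {0,1,2}`, `upsilon b d l i ε j`
is the value assigned to the edge between the vertices with `i`-th coordinate `j` and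
`j+1`.  (It only depends on the coordinates `ε k` for `k ≠ i`.) -/
def upsilon (b : ℕ) (d l : ℤ) (i : Fin b) (ε : Fin b → Fin 4) (j : Fin 3) : ℤ :=
  if j = 0 then
    2 * ((Finset.univ.filter fun k : Fin b => i < k ∧ (ε k = 0 ∨ ε k = 1)).card : ℤ) - d
  else if j = 1 then
    -2 * ((Finset.univ.filter fun k : Fin b => k < i ∧ (ε k = 1 ∨ ε k = 2)).card : ℤ)
      - 2 - 2 * l
  else
    2 * ((Finset.univ.filter fun k : Fin b => i < k ∧ (ε k = 2 ∨ ε k = 3)).card : ℤ) - d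

open Finset Function

namespace Cubulation

variable {ι M : Type*} [DecidableEq ι] {n : ℕ}

def coboundary [Sub M] (G : (ι → Fin (n + 1)) → M) (ε : ι → Fin (n + 1)) (i : ι)
    (j : Fin n) : M :=
  G (update ε i j.castSucc) - G (update ε i j.succ)

section Uniqueness

variable [AddCommGroup M] {G H : (ι → Fin (n + 1)) → M}

theorem apply_update_eq_of_coboundary_eq_zero (hG : ∀ ε i j, coboundary G ε i j = 0)
    (ε : ι → Fin (n + 1)) (i : ι) (a : Fin (n + 1)) : G (update ε i a) = G (update ε i 0) := by
  induction a using Fin.induction with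
  | zero => rfl
  | succ j ih => rw [← ih, eq_comm, ← sub_eq_zero]; exact hG ε i j

theorem apply_eq_of_coboundary_eq_zero [Fintype ι] (hG : ∀ ε i j, coboundary G ε i j = 0)
    (ε : ι → Fin (n + 1)) : G ε = G 0 := by
  suffices ∀ s : Finset ι, G (s.piecewise ε 0) = G 0 by simpa using this univ
  intro s
  induction s using Finset.induction_on with
  | empty => simp
  | insert i s hi ih =>
    rw [piecewise_insert, apply_update_eq_of_coboundary_eq_zero hG, ← ih]
    exact congrArg G (update_eq_self_iff.mpr (piecewise_eq_of_notMem s ε 0 hi).symm)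

theorem eq_of_coboundary_eq [Fintype ι] (h0 : G 0 = H 0)
    (h : ∀ ε i j, coboundary G ε i j = coboundary H ε i j) : G = H := by
  funext ε
  have hGH : ∀ ε i j, coboundary (G - H) ε i j = 0 := fun ε i j =>
    (sub_sub_sub_comm _ _ _ _).trans (sub_eq_zero.mpr (h ε i j))
  simpa [h0, sub_eq_zero] using apply_eq_of_coboundary_eq_zero hGH ε

end Uniqueness

variable [Fintype ι]

theorem coboundary_sum_apply [AddCommGroup M] (f : ι → Fin (n + 1) → M) (ε : ι → Fin (n + 1))
    (i : ι) (j : Fin n) :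
    coboundary (fun ε => ∑ k, f k (ε k)) ε i j = f i j.castSucc - f i j.succ := by
  simp only [coboundary, apply_update f, sum_update_of_mem (mem_univ i)]
  exact add_sub_add_right_eq_sub _ _ _

theorem coboundary_sum_lt_mul [LinearOrder ι] {R : Type*} [CommRing R] (p q : Fin (n + 1) → R) (ε : ι → Fin (n + 1))
    (i : ι) (j : Fin n) :
    coboundary (fun ε => ∑ k, ∑ m, if k < m then p (ε k) * q (ε m) else 0) ε i j =
      (p j.castSucc - p j.succ) * ∑ m, (if i < m then q (ε m) else 0) +
        (q j.castSucc - q j.succ) * ∑ k, (if k < i then p (ε k) else 0) := by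
  have pointwise : ∀ k m : ι,
      ((if k < m then p (update ε i j.castSucc k) * q (update ε i j.castSucc m) else 0) -
        if k < m then p (update ε i j.succ k) * q (update ε i j.succ m) else 0) =
      (if k = i then (p j.castSucc - p j.succ) * (if i < m then q (ε m) else 0) else 0) +
        if m = i then (q j.castSucc - q j.succ) * (if k < i then p (ε k) else 0) else 0 := by
    intro k m
    by_cases hk : k = i <;> by_cases hm : m = i
    · subst hk hm; simp
    · subst hk
      simp only [update_self, update_of_ne hm, hm, ↓reduceIte, add_zero]
      split_ifs <;> ring
    · subst hm
      simp only [update_self, update_of_ne hk, hk, ↓reduceIte, zero_add]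
      split_ifs <;> ring
    · simp [hk, hm]
  simp only [coboundary, ← sum_sub_distrib, pointwise, sum_add_distrib, sum_ite_irrel,
    sum_const_zero, sum_ite_eq', mem_univ, if_true, mul_sum]

end Cubulation

open Cubulation

def midIndicator (x : Fin 4) : ℤ := if x = 1 ∨ x = 2 then 1 else 0

def highIndicator (x : Fin 4) : ℤ := if x = 2 ∨ x = 3 then 1 else 0

def upsilonPrimitiveDiag (b : ℕ) (d l : ℤ) (k : Fin b) : Fin 4 → ℤ :=
  let c := d - 2 * ((b : ℤ) - 1 - k)
  ![0, c, c + 2 + 2 * l, c + d + 2 + 2 * l]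

def upsilonPrimitive (b : ℕ) (d l : ℤ) (ε : Fin b → Fin 4) : ℤ :=
  ∑ k, upsilonPrimitiveDiag b d l k (ε k) +
    2 * ∑ k, ∑ m, if k < m then midIndicator (ε k) * highIndicator (ε m) else 0

theorem upsilonPrimitive_zero (b : ℕ) (d l : ℤ) : upsilonPrimitive b d l 0 = 0 := by
  simp [upsilonPrimitive, upsilonPrimitiveDiag, midIndicator]

theorem natCast_card_filter_gt_and_high {b : ℕ} (i : Fin b) (ε : Fin b → Fin 4) :
    ((univ.filter fun k => i < k ∧ (ε k = 2 ∨ ε k = 3)).card : ℤ) =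
      ∑ m, if i < m then highIndicator (ε m) else 0 := by
  simp only [natCast_card_filter, ite_and]
  rfl

theorem natCast_card_filter_lt_and_mid {b : ℕ} (i : Fin b) (ε : Fin b → Fin 4) :
    ((univ.filter fun k => k < i ∧ (ε k = 1 ∨ ε k = 2)).card : ℤ) =
      ∑ k, if k < i then midIndicator (ε k) else 0 := by
  simp only [natCast_card_filter, ite_and]
  rfl

theorem natCast_card_filter_gt_and_low {b : ℕ} (i : Fin b) (ε : Fin b → Fin 4) :
    ((univ.filter fun k => i < k ∧ (ε k = 0 ∨ ε k = 1)).card : ℤ) =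
      ((b : ℤ) - 1 - i) - ∑ m, if i < m then highIndicator (ε m) else 0 := by
  have hpartition : ∀ m, (if ε m = 0 ∨ ε m = 1 then 1 else 0) + highIndicator (ε m) = 1 := by
    intro m; unfold highIndicator; generalize ε m = x; fin_cases x <;> decide
  have hIoi : ((univ.filter fun k => i < k).card : ℤ) = (b : ℤ) - 1 - i := by
    rw [filter_lt_eq_Ioi, Fin.card_Ioi]; omega
  rw [eq_sub_iff_add_eq, ← hIoi, natCast_card_filter, natCast_card_filter, ← sum_add_distrib]
  refine sum_congr rfl fun m _ => ?_
  by_cases him : i < m <;> simp only [him, true_and, false_and, ↓reduceIte, hpartition, add_zero]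

theorem coboundary_upsilonPrimitive (b : ℕ) (d l : ℤ) (ε : Fin b → Fin 4) (i : Fin b)
    (j : Fin 3) : coboundary (upsilonPrimitive b d l) ε i j = upsilon b d l i ε j := by
  have hlinear : coboundary (upsilonPrimitive b d l) ε i j =
      coboundary (fun ε => ∑ k, upsilonPrimitiveDiag b d l k (ε k)) ε i j +
        2 * coboundary (fun ε => ∑ k, ∑ m,
          if k < m then midIndicator (ε k) * highIndicator (ε m) else 0) ε i j := by
    simp only [coboundary, upsilonPrimitive]; ring
  rw [hlinear, coboundary_sum_apply, coboundary_sum_lt_mul]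
  fin_cases j <;>
    simp only [upsilon, natCast_card_filter_gt_and_low, natCast_card_filter_gt_and_high,
      natCast_card_filter_lt_and_mid, upsilonPrimitiveDiag, midIndicator, highIndicator,
      Fin.reduceFinMk, Fin.reduceCastSucc, Fin.reduceSucc, Fin.reduceEq, Matrix.cons_val,
      or_true, or_false, or_self, ↓reduceIte] <;>
    ring

theorem upsilon_is_coboundary_general (b : ℕ) (d l : ℤ) :
    ∃! G : (Fin b → Fin 4) → ℤ,
      G (fun _ => 0) = 0 ∧
      ∀ (ε : Fin b → Fin 4) (i : Fin b) (j : Fin 3),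
        G (Function.update ε i j.castSucc) - G (Function.update ε i j.succ) =
          upsilon b d l i ε j := by
  refine ⟨upsilonPrimitive b d l,
    ⟨upsilonPrimitive_zero b d l, coboundary_upsilonPrimitive b d l⟩, ?_⟩
  rintro G ⟨hG0, hG⟩
  refine eq_of_coboundary_eq (hG0.trans (upsilonPrimitive_zero b d l).symm) fun ε i j => ?_
  exact (hG ε i j).trans (coboundary_upsilonPrimitive b d l ε i j).symm

/-- The 1-cochain `υ` is a coboundary: there is a unique function
`G : [0,3]^b ∩ ℤ^b → ℤ` with `G(0,…,0) = 0` whose coboundary is `υ`, i.e. for every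
edge of the fine cubulation (in direction `i`, between `i`-th coordinates `j` and `j+1`)
we have `G(…,j,…) - G(…,j+1,…) = υ` of that edge. -/
theorem upsilon_is_coboundary (b : ℕ) (hb : 1 ≤ b) (d l : ℤ) :
    ∃! G : (Fin b → Fin 4) → ℤ,
      G (fun _ => 0) = 0 ∧
      ∀ (ε : Fin b → Fin 4) (i : Fin b) (j : Fin 3),
        G (Function.update ε i j.castSucc) - G (Function.update ε i j.succ) =
          upsilon b d l i ε j :=
  upsilon_is_coboundary_general b d l
end

section
/- The grading function G on [0,3]^b ∩ Z^b satisfies the duality relation: for every vertex ε, (G(ε) + G(ε*))/2 = C(a+2, 2) - C(a-b+2, 2), where ε* = (3-ε_1, ..., 3-ε_b) and C denotes binomial coefficients. Equivalently, G(ε) + G(ε*) is independent of ε and equals G(3,...,3). -/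
/-!
The cochain `υ` is invariant under the duality `ε ↦ ε* = rev ∘ ε`, which reverses every edge
(`j ↦ 2 - j`): the conditions `ε k ∈ {0,1}` and `ε k ∈ {2,3}` are exchanged and `ε k ∈ {1,2}`
is preserved. Hence `ε ↦ G ε + G ε*` has zero coboundary, so it is constant on the connected
grid, equal to `G (0,…,0) + G (3,…,3)`. The value `G (3,…,3)` is computed along the path raising
the coordinates to `3` one at a time, first to last: raising the `m`-th one changes `G` by
`2d + 2 + 2l - 2(b - 1 - m)`, and the sum is `b(2a - b + 3) = 2(C(a+2,2) - C(a-b+2,2))`.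
-/

open Function Finset

section
variable {ι α β : Type*} [Fintype ι] [DecidableEq ι]

theorem eq_of_forall_update_eq {f : (ι → α) → β} (h : ∀ x i a, f (update x i a) = f x)
    (x y : ι → α) : f x = f y := by
  suffices ∀ s : Finset ι, f (s.piecewise y x) = f x by
    simpa using (this univ).symm
  intro s
  induction s using Finset.induction_on with
  | empty => simp
  | insert i s _ ih => rw [piecewise_insert, h, ih]

theorem eq_of_update_castSucc_eq_update_succ {n : ℕ} {f : (ι → Fin (n + 1)) → β}
    (h : ∀ x i (j : Fin n), f (update x i j.castSucc) = f (update x i j.succ))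
    (x y : ι → Fin (n + 1)) : f x = f y := by
  have update_eq_update_zero (x : ι → Fin (n + 1)) (i : ι) (a : Fin (n + 1)) :
      f (update x i a) = f (update x i 0) := by
    induction a using Fin.induction with
    | zero => rfl
    | succ j ih => rw [← h, ih]
  refine eq_of_forall_update_eq (fun x i a => ?_) x y
  rw [update_eq_update_zero, ← update_eq_update_zero x i (x i), update_eq_self]

end

theorem upsilon_rev (b : ℕ) (d l : ℤ) (i : Fin b) (ε : Fin b → Fin 4) (j : Fin 3) :
    upsilon b d l i (Fin.rev ∘ ε) j.rev = upsilon b d l i ε j := by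
  have h01 : ∀ x : Fin 4, (x.rev = 0 ∨ x.rev = 1) ↔ (x = 2 ∨ x = 3) := by decide
  have h12 : ∀ x : Fin 4, (x.rev = 1 ∨ x.rev = 2) ↔ (x = 1 ∨ x = 2) := by decide
  have h23 : ∀ x : Fin 4, (x.rev = 2 ∨ x.rev = 3) ↔ (x = 0 ∨ x = 1) := by decide
  fin_cases j <;> simp [upsilon, h01, h12, h23]

section GradingFunction

variable {b : ℕ} {d l : ℤ} {G : (Fin b → Fin 4) → ℤ}
  (hG : ∀ (ε : Fin b → Fin 4) (i : Fin b) (j : Fin 3),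
    G (update ε i j.castSucc) - G (update ε i j.succ) = upsilon b d l i ε j)
include hG

theorem add_comp_rev_eq (ε : Fin b → Fin 4) :
    G ε + G (Fin.rev ∘ ε) = G (fun _ => 0) + G (fun _ => 3) := by
  refine eq_of_update_castSucc_eq_update_succ (f := fun ε => G ε + G (Fin.rev ∘ ε))
    (fun ε i j => ?_) ε (fun _ => 0)
  have hrev := hG (Fin.rev ∘ ε) i j.rev
  rw [upsilon_rev] at hrev
  simp only [comp_update, Fin.rev_castSucc, Fin.rev_succ]
  linarith [hG ε i j]

def pathVertex (b m : ℕ) : Fin b → Fin 4 := fun k => if (k : ℕ) < m then 3 else 0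

theorem pathVertex_succ (m : ℕ) (hm : m < b) :
    G (pathVertex b (m + 1)) = G (pathVertex b m) + 2 * d + 2 + 2 * l - 2 * (b - 1 - m) := by
  set i : Fin b := ⟨m, hm⟩
  have hlow : update (pathVertex b m) i 0 = pathVertex b m := by
    funext k
    simp only [pathVertex, update_apply, Fin.ext_iff, i]
    split_ifs <;> first | rfl | omega
  have hhigh : update (pathVertex b m) i 3 = pathVertex b (m + 1) := by
    funext k
    simp only [pathVertex, update_apply, Fin.ext_iff, i]
    split_ifs <;> first | rfl | omega
  have hA : #{k | i < k ∧ (pathVertex b m k = 0 ∨ pathVertex b m k = 1)} = b - 1 - m := by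
    rw [← Fin.card_Ioi i]
    congr 1; ext k; simp [pathVertex, i, Fin.lt_def]; omega
  have hB : #{k | k < i ∧ (pathVertex b m k = 1 ∨ pathVertex b m k = 2)} = 0 := by
    rw [card_eq_zero, filter_eq_empty_iff]
    intro k _
    simp only [pathVertex, i, Fin.lt_def]
    split_ifs <;> first | decide | omega
  have hC : #{k | i < k ∧ (pathVertex b m k = 2 ∨ pathVertex b m k = 3)} = 0 := by
    rw [card_eq_zero, filter_eq_empty_iff]
    intro k _
    simp only [pathVertex, i, Fin.lt_def]
    split_ifs <;> first | decide | omega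
  have h0 := hG (pathVertex b m) i 0
  have h1 := hG (pathVertex b m) i 1
  have h2 := hG (pathVertex b m) i 2
  simp only [upsilon, Fin.isValue, Fin.castSucc_zero, Fin.succ_zero_eq_one, Fin.castSucc_one,
    Fin.succ_one_eq_two, Fin.reduceCastSucc, Fin.reduceSucc, Fin.reduceEq, one_ne_zero,
    ↓reduceIte, Int.reduceNeg, CharP.cast_eq_zero, mul_zero, zero_sub, hA, hB, hC, hlow, hhigh]
    at h0 h1 h2
  omega

theorem G_pathVertex {m : ℕ} (hm : m ≤ b) :
    G (pathVertex b m) = G (fun _ => 0) + m * (2 * d + 2 * l - 2 * b + m + 3) := by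
  induction m with
  | zero => simp only [CharP.cast_eq_zero, zero_mul, add_zero]; rfl
  | succ m ih =>
    rw [pathVertex_succ hG m hm, ih (by omega)]
    push_cast
    ring

theorem G_const_three : G (fun _ => 3) = G (fun _ => 0) + b * (2 * d + 2 * l - b + 3) := by
  have h : pathVertex b b = fun _ => 3 := funext fun k => if_pos k.is_lt
  rw [← h, G_pathVertex hG le_rfl]
  ring

end GradingFunction

theorem two_mul_choose_two_sub_choose_two (a b : ℕ) (hba : b ≤ a) :
    2 * (((a + 2).choose 2 : ℤ) - ((a - b + 2).choose 2 : ℤ)) = b * (2 * a - b + 3) := by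
  have two_mul_choose_two_add_two (n : ℕ) : 2 * ((n + 2).choose 2 : ℤ) = (n + 2) * (n + 1) := by
    have h := Nat.add_one_mul_choose_eq (n + 1) 1
    rw [Nat.choose_one_right] at h
    have := congrArg (Nat.cast : ℕ → ℤ) h
    push_cast at this
    linarith
  rw [mul_sub, two_mul_choose_two_add_two, two_mul_choose_two_add_two]
  push_cast [hba]
  ring

/-- Duality for the grading function: if `G` has coboundary `υ` (with `l = c - b`) and
`G(0,…,0) = 0`, then for every vertex `ε`, with dual vertex `ε* = (3-ε_1, …, 3-ε_b)`,
`(G(ε) + G(ε*))/2 = C(a+2,2) - C(a-b+2,2)`. -/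
theorem grading_function_duality (a b c d : ℕ)
    (hsum : a + b = c + d) (hba : b ≤ a)
    (G : (Fin b → Fin 4) → ℤ)
    (hG0 : G (fun _ => 0) = 0)
    (hG : ∀ (ε : Fin b → Fin 4) (i : Fin b) (j : Fin 3),
      G (Function.update ε i j.castSucc) - G (Function.update ε i j.succ) =
        upsilon b (d : ℤ) ((c : ℤ) - (b : ℤ)) i ε j)
    (ε : Fin b → Fin 4) :
    G ε + G (fun i => (⟨3 - (ε i : ℕ), by omega⟩ : Fin 4)) =
      2 * (((a + 2).choose 2 : ℤ) - ((a - b + 2).choose 2 : ℤ)) := by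
  have hdual : (fun i => (⟨3 - (ε i : ℕ), by omega⟩ : Fin 4)) = Fin.rev ∘ ε := by
    funext i; ext; simp [Fin.val_rev]
  rw [hdual, add_comp_rev_eq hG, G_const_three hG, hG0,
    two_mul_choose_two_sub_choose_two a b hba]
  have : (a : ℤ) + b = c + d := by exact_mod_cast hsum
  linear_combination (-2 * b : ℤ) * this
end
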